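/- T is a tangle of separations of order k+1 on (X, f) if and only if F = {(A, B) : (B, A) ∈ T} is an ultrafilter of separations of order k+1 on (X, f). -/

import Mathlib

open Set

variable {α : Type*}

/-- Symmetry of a set function: `f A = f Aᶜ`. -/
def SymmFn (f : Set α → ℕ) : Prop := ∀ A : Set α, f A = f Aᶜ

/-- Submodularity of a set function. -/
def SubmodFn (f : Set α → ℕ) : Prop :=
  ∀ A B : Set α, f A + f B ≥ f (A ∩ B) + f (A ∪ B)

/-- A separation of the ground set: a partition `(A, B)` of the universe. -/
def IsSep (p : Set α × Set α) : Prop :=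
  p.1 ∪ p.2 = Set.univ ∧ p.1 ∩ p.2 = ∅

/-- Partial order on separations: `(A,B) ≤ (C,D)` iff `A ⊆ C` and `D ⊆ B`. -/
def SepLE (p q : Set α × Set α) : Prop := p.1 ⊆ q.1 ∧ q.2 ⊆ p.2

/-- Tangle of separations of order `k+1`. -/
def IsTangle (f : Set α → ℕ) (k : ℕ) (T : Set (Set α × Set α)) : Prop :=
  (∀ p ∈ T, IsSep p ∧ f p.1 ≤ k) ∧
  (∀ A B : Set α, IsSep (A, B) → f A ≤ k → ((A, B) ∈ T ∨ (B, A) ∈ T)) ∧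
  (∀ e : α, f {e} ≤ k → (({e} : Set α), ({e} : Set α)ᶜ) ∈ T) ∧
  (∀ p₁ ∈ T, ∀ p₂ ∈ T, ∀ p₃ ∈ T,
    p₁.1 ∪ p₂.1 ∪ p₃.1 ≠ (Set.univ : Set α))

/-- Linear tangle of separations of order `k+1`. -/
def IsLinearTangle (f : Set α → ℕ) (k : ℕ) (T : Set (Set α × Set α)) : Prop :=
  (∀ p ∈ T, IsSep p ∧ f p.1 ≤ k) ∧
  (∀ A B : Set α, IsSep (A, B) → f A ≤ k → ((A, B) ∈ T ∨ (B, A) ∈ T)) ∧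
  (∀ e : α, f {e} ≤ k → (({e} : Set α), ({e} : Set α)ᶜ) ∈ T) ∧
  (∀ p₁ ∈ T, ∀ p₂ ∈ T, ∀ e : α, f {e} ≤ k →
    p₁.1 ∪ p₂.1 ∪ {e} ≠ (Set.univ : Set α))

/-- Ultrafilter of separations of order `k+1`. -/
def IsUltraSep (f : Set α → ℕ) (k : ℕ) (F : Set (Set α × Set α)) : Prop :=
  (∀ p ∈ F, IsSep p ∧ f p.1 ≤ k) ∧
  (∀ A B : Set α, IsSep (A, B) → f A ≤ k → ((A, B) ∈ F ∨ (B, A) ∈ F)) ∧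
  ((∅, (Set.univ : Set α)) ∉ F) ∧
  (∀ e : α, f {e} ≤ k → (({e} : Set α), ({e} : Set α)ᶜ) ∉ F) ∧
  (∀ p ∈ F, ∀ q : Set α × Set α, SepLE p q → IsSep q → f q.1 ≤ k → q ∈ F) ∧
  (∀ p ∈ F, ∀ q ∈ F, f (p.1 ∩ q.1) ≤ k → (p.1 ∩ q.1, p.2 ∪ q.2) ∈ F)

/-- Weak ultrafilter of separations of order `k+1`. -/
def IsWeakUltraSep (f : Set α → ℕ) (k : ℕ) (F : Set (Set α × Set α)) : Prop :=
  (∀ p ∈ F, IsSep p ∧ f p.1 ≤ k) ∧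
  (∀ A B : Set α, IsSep (A, B) → f A ≤ k → ((A, B) ∈ F ∨ (B, A) ∈ F)) ∧
  ((∅, (Set.univ : Set α)) ∉ F) ∧
  (∀ e : α, f {e} ≤ k → (({e} : Set α), ({e} : Set α)ᶜ) ∉ F) ∧
  (∀ p ∈ F, ∀ q : Set α × Set α, SepLE p q → IsSep q → f q.1 ≤ k → q ∈ F) ∧
  (∀ p ∈ F, ∀ q ∈ F, f (p.1 ∩ q.1) ≤ k → p.1 ∩ q.1 ≠ ∅)

/-- Single ultrafilter of separations of order `k+1`. -/
def IsSingleUltraSep (f : Set α → ℕ) (k : ℕ) (F : Set (Set α × Set α)) : Prop :=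
  (∀ p ∈ F, IsSep p ∧ f p.1 ≤ k) ∧
  (∀ A B : Set α, IsSep (A, B) → f A ≤ k → ((A, B) ∈ F ∨ (B, A) ∈ F)) ∧
  ((∅, (Set.univ : Set α)) ∉ F) ∧
  (∀ e : α, f {e} ≤ k → (({e} : Set α), ({e} : Set α)ᶜ) ∉ F) ∧
  (∀ p ∈ F, ∀ q : Set α × Set α, SepLE p q → IsSep q → f q.1 ≤ k → q ∈ F) ∧
  (∀ p ∈ F, ∀ e : α, f {e} ≤ k → f (p.1 \ {e}) ≤ k →
    (p.1 \ {e}, p.2 ∪ {e}) ∈ F)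

/-- Profile of separations of order `k+1`. -/
def IsProfileSep (f : Set α → ℕ) (k : ℕ) (P : Set (Set α × Set α)) : Prop :=
  (∀ p ∈ P, IsSep p ∧ f p.1 ≤ k) ∧
  (∀ A B : Set α, IsSep (A, B) → f A ≤ k → ((A, B) ∈ P ∨ (B, A) ∈ P)) ∧
  (∀ p : Set α × Set α, ∀ q ∈ P, SepLE p q → IsSep p → f p.1 ≤ k →
    (p.2, p.1) ∉ P) ∧
  (∀ p ∈ P, ∀ q ∈ P, (p.2 ∩ q.2, p.1 ∪ q.1) ∉ P)

/-- A profile is non-principal if it contains all small singleton separations. -/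
def NonPrincipalSep (f : Set α → ℕ) (k : ℕ) (P : Set (Set α × Set α)) : Prop :=
  ∀ e : α, f {e} ≤ k → (({e} : Set α), ({e} : Set α)ᶜ) ∈ P


/-!
Swapping the sides of every separation turns the tangle axioms into the ultrafilter axioms:
each of (F2)–(F5) fails only if three members of `T` cover the ground set. Conversely, (T3) for
the swapped family asks that no three big sides `B₁, B₂, B₃` of the ultrafilter have empty
intersection. Posimodularity `f (A \ B) + f (B \ A) ≤ f A + f B` gives, for each pair, one of
`Bᵢ \ Bⱼ` or `Bⱼ \ Bᵢ` of order at most `k`. If `Bᵢ \ Bⱼ` and `Bₗ \ Bᵢ` both have small order,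
then `Bᵢ \ Bⱼ` misses `Bⱼ`, so its complement is big, and meets `Bₗ` exactly in `Bₗ \ Bᵢ`, which
is then big although it misses `Bᵢ`. Every tournament on three vertices contains such a path.
-/

section Separations

variable {f : Set α → ℕ} {k : ℕ}

lemma isSep_iff_snd_eq_compl {p : Set α × Set α} : IsSep p ↔ p.2 = p.1ᶜ := by
  rw [IsSep, eq_compl_iff_isCompl, isCompl_comm, isCompl_iff, disjoint_iff, codisjoint_iff]
  exact and_comm

lemma isSep_compl (A : Set α) : IsSep (A, Aᶜ) :=
  isSep_iff_snd_eq_compl.2 rfl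

lemma isSep_swap_iff {p : Set α × Set α} : IsSep (p.2, p.1) ↔ IsSep p := by
  simp only [IsSep, union_comm p.2, inter_comm p.2]

lemma SymmFn.apply_snd (hs : SymmFn f) {p : Set α × Set α} (hp : IsSep p) : f p.2 = f p.1 := by
  rw [isSep_iff_snd_eq_compl.1 hp, ← hs]

lemma SubmodFn.posimodular (hm : SubmodFn f) (hs : SymmFn f) (A B : Set α) :
    f (A \ B) + f (B \ A) ≤ f A + f B := by
  have h := hm A Bᶜ
  rw [← Set.sdiff_eq, ← Set.compl_sdiff, ← hs, ← hs] at h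
  omega

lemma SubmodFn.apply_empty_le (hm : SubmodFn f) (hs : SymmFn f) (A : Set α) : f ∅ ≤ f A := by
  have h := hm.posimodular hs A A
  rw [Set.sdiff_self] at h
  omega

variable {T : Set (Set α × Set α)}

lemma SymmFn.isSep_le_swap (hs : SymmFn f) (hT : ∀ p ∈ T, IsSep p ∧ f p.1 ≤ k) :
    ∀ p ∈ {p : Set α × Set α | (p.2, p.1) ∈ T}, IsSep p ∧ f p.1 ≤ k := fun p hp =>
  have ⟨hsep, hk⟩ := hT (p.2, p.1) hp
  ⟨isSep_swap_iff.1 hsep, hs.apply_snd hsep ▸ hk⟩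

lemma SymmFn.orients_swap (hs : SymmFn f)
    (hT : ∀ A B : Set α, IsSep (A, B) → f A ≤ k → ((A, B) ∈ T ∨ (B, A) ∈ T)) :
    ∀ A B : Set α, IsSep (A, B) → f A ≤ k →
      ((A, B) ∈ {p : Set α × Set α | (p.2, p.1) ∈ T} ∨
        (B, A) ∈ {p : Set α × Set α | (p.2, p.1) ∈ T}) := fun A B hAB hA =>
  hT B A (isSep_swap_iff.2 hAB) (hs.apply_snd hAB ▸ hA)

end Separations

namespace IsTangle

variable {f : Set α → ℕ} {k : ℕ} {T : Set (Set α × Set α)}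

lemma notMem_of_union_eq_univ (hT : IsTangle f k T) {p₁ p₂ r : Set α × Set α} (h₁ : p₁ ∈ T)
    (h₂ : p₂ ∈ T) (hcover : p₁.1 ∪ p₂.1 ∪ r.1 = univ) : r ∉ T :=
  fun hr => hT.2.2.2 _ h₁ _ h₂ _ hr hcover

lemma swap_mem_of_union_eq_univ (hT : IsTangle f k T) {p₁ p₂ r : Set α × Set α} (h₁ : p₁ ∈ T)
    (h₂ : p₂ ∈ T) (hr : IsSep r) (hrk : f r.1 ≤ k) (hcover : p₁.1 ∪ p₂.1 ∪ r.1 = univ) :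
    (r.2, r.1) ∈ T :=
  (hT.2.1 r.1 r.2 hr hrk).resolve_left (hT.notMem_of_union_eq_univ h₁ h₂ hcover)

theorem isUltraSep_swap (hs : SymmFn f) (hT : IsTangle f k T) :
    IsUltraSep f k {p : Set α × Set α | (p.2, p.1) ∈ T} := by
  refine ⟨hs.isSep_le_swap hT.1, hs.orients_swap hT.2.1, fun h => ?_, fun e he h => ?_,
    fun p hp q hpq hq hqk => ?_, fun p hp q hq hk => ?_⟩
  · exact hT.notMem_of_union_eq_univ h h (by simp) h
  · exact hT.notMem_of_union_eq_univ (hT.2.2.1 e he) (hT.2.2.1 e he) (by simp) h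
  · have hp1 : p.1 = p.2ᶜ := isSep_iff_snd_eq_compl.1 (hT.1 _ hp).1
    refine hT.swap_mem_of_union_eq_univ hp hp hq hqk (eq_univ_of_subset ?_ (union_compl_self p.2))
    rw [union_self, ← hp1]
    exact union_subset_union_right _ hpq.1
  · have hp2 : p.2 = p.1ᶜ := isSep_iff_snd_eq_compl.1 (isSep_swap_iff.1 (hT.1 _ hp).1)
    have hq2 : q.2 = q.1ᶜ := isSep_iff_snd_eq_compl.1 (isSep_swap_iff.1 (hT.1 _ hq).1)
    have hcompl : p.2 ∪ q.2 = (p.1 ∩ q.1)ᶜ := by rw [hp2, hq2, compl_inter]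
    refine hT.swap_mem_of_union_eq_univ hp hq (isSep_iff_snd_eq_compl.2 hcompl) hk ?_
    rw [hcompl, compl_union_self]

end IsTangle

namespace IsUltraSep

variable {f : Set α → ℕ} {k : ℕ} {F : Set (Set α × Set α)}

lemma inter_ne_empty (hs : SymmFn f) (hm : SubmodFn f) (hF : IsUltraSep f k F)
    {p q : Set α × Set α} (hp : p ∈ F) (hq : q ∈ F) : p.1 ∩ q.1 ≠ ∅ := by
  intro h
  have hk : f (p.1 ∩ q.1) ≤ k := h ▸ (hm.apply_empty_le hs p.1).trans (hF.1 p hp).2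
  have hmem := hF.2.2.2.2.2 p hp q hq hk
  rw [h] at hmem
  have huniv : p.2 ∪ q.2 = univ := by simpa using isSep_iff_snd_eq_compl.1 (hF.1 _ hmem).1
  exact hF.2.2.1 (huniv ▸ hmem)

lemma swap_mem_of_inter_eq_empty (hs : SymmFn f) (hm : SubmodFn f) (hF : IsUltraSep f k F)
    {p q : Set α × Set α} (hp : p ∈ F) (hq : IsSep q) (hqk : f q.1 ≤ k) (hqp : q.1 ∩ p.1 = ∅) :
    (q.2, q.1) ∈ F :=
  (hF.2.1 q.1 q.2 hq hqk).resolve_left fun h => hF.inter_ne_empty hs hm h hp hqp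

lemma lt_apply_sdiff (hs : SymmFn f) (hm : SubmodFn f) (hF : IsUltraSep f k F)
    {p q r : Set α × Set α} (hp : p ∈ F) (hq : q ∈ F) (hr : r ∈ F)
    (hpqr : p.1 ∩ q.1 ∩ r.1 = ∅) (hpq : f (p.1 \ q.1) ≤ k) : k < f (r.1 \ p.1) := by
  by_contra! hrp
  have hcompl : ((p.1 \ q.1)ᶜ, p.1 \ q.1) ∈ F :=
    hF.swap_mem_of_inter_eq_empty hs hm hq (isSep_compl _) hpq sdiff_inter_self
  have hinter : (p.1 \ q.1)ᶜ ∩ r.1 = r.1 \ p.1 := by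
    ext x
    have := eq_empty_iff_forall_notMem.1 hpqr x
    simp only [mem_inter_iff, mem_compl_iff, mem_sdiff] at this ⊢
    tauto
  have hmem := hF.2.2.2.2.2 _ hcompl _ hr (hinter ▸ hrp)
  rw [hinter] at hmem
  exact hF.inter_ne_empty hs hm hmem hp sdiff_inter_self

lemma inter_inter_ne_empty (hs : SymmFn f) (hm : SubmodFn f) (hF : IsUltraSep f k F)
    {p q r : Set α × Set α} (hp : p ∈ F) (hq : q ∈ F) (hr : r ∈ F) : p.1 ∩ q.1 ∩ r.1 ≠ ∅ := by
  intro h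
  have hpqr := hF.lt_apply_sdiff hs hm hp hq hr h
  have hqrp := hF.lt_apply_sdiff hs hm hq hr hp (by rw [← h]; ac_rfl)
  have hrpq := hF.lt_apply_sdiff hs hm hr hp hq (by rw [← h]; ac_rfl)
  have hprq := hF.lt_apply_sdiff hs hm hp hr hq (by rw [← h]; ac_rfl)
  have hrqp := hF.lt_apply_sdiff hs hm hr hq hp (by rw [← h]; ac_rfl)
  have hqpr := hF.lt_apply_sdiff hs hm hq hp hr (by rw [← h]; ac_rfl)
  have := hm.posimodular hs p.1 q.1
  have := hm.posimodular hs q.1 r.1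
  have := hm.posimodular hs r.1 p.1
  have := (hF.1 p hp).2
  have := (hF.1 q hq).2
  have := (hF.1 r hr).2
  omega

theorem isTangle_swap (hs : SymmFn f) (hm : SubmodFn f) (hF : IsUltraSep f k F) :
    IsTangle f k {p : Set α × Set α | (p.2, p.1) ∈ F} := by
  refine ⟨hs.isSep_le_swap hF.1, hs.orients_swap hF.2.1, fun e he => ?_,
    fun p₁ h₁ p₂ h₂ p₃ h₃ hcover => hF.inter_inter_ne_empty hs hm h₁ h₂ h₃ ?_⟩
  · exact (hF.2.1 _ _ (isSep_iff_snd_eq_compl.2 (compl_compl _).symm) (hs {e} ▸ he)).resolve_right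
      (hF.2.2.2.1 e he)
  · have fst_eq : ∀ p ∈ {p : Set α × Set α | (p.2, p.1) ∈ F}, p.1 = p.2ᶜ :=
      fun p hp => isSep_iff_snd_eq_compl.1 (hF.1 _ hp).1
    rwa [fst_eq _ h₁, fst_eq _ h₂, fst_eq _ h₃, ← compl_inter, ← compl_inter,
      compl_univ_iff] at hcover

end IsUltraSep

theorem stmt8_general (f : Set α → ℕ) (hs : SymmFn f) (hm : SubmodFn f)
    (k : ℕ) (T : Set (Set α × Set α)) :
    IsTangle f k T ↔ IsUltraSep f k {p : Set α × Set α | (p.2, p.1) ∈ T} :=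
  ⟨fun hT => hT.isUltraSep_swap hs, fun hF => hF.isTangle_swap hs hm⟩

theorem stmt8 [Fintype α] (f : Set α → ℕ) (hs : SymmFn f) (hm : SubmodFn f)
    (k : ℕ) (T : Set (Set α × Set α)) :
    IsTangle f k T ↔ IsUltraSep f k {p : Set α × Set α | (p.2, p.1) ∈ T} :=
  stmt8_general f hs hm k T
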